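/- arXiv:2412.14395 — 9 statements merged into one kernel-verified Lean document; each statement's English description precedes it below -/
import Mathlib

section
/- There exists a constant θ > 0 such that B[u, u] ≥ θ ‖u‖² for all u ∈ V. -/
/-!
Only the interactions between points `y ∈ [-L, L]` and points `x > L` are needed. Since `u x = 0`
there, they contribute `u y ^ 2 * ∫_{x > L} γ (x - y) ≥ u y ^ 2 * ∫_{t > 2L} γ t`, so
`B[u, u] ≥ (1/2) (∫_{t > 2L} γ) ‖u‖²`, and the tail integral is positive because `γ > 0`.
Integrability of the double integrand comes from `(a - b)² ≤ 2a² + 2b²` and the integrability of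
the convolution integrand of `u² ∈ L¹` and `γ ∈ L¹`.
-/

open MeasureTheory Set

section ConvolutionKernel

variable {G : Type*} [AddGroup G] [MeasurableSpace G] [MeasurableAdd₂ G] [MeasurableNeg G]
  {μ : Measure G} [SFinite μ] [μ.IsAddRightInvariant] [μ.IsNegInvariant]

theorem MeasureTheory.MemLp.integrable_sq_sub_mul_comp_sub {u γ : G → ℝ} (hu : MemLp u 2 μ)
    (hγ : Integrable γ μ) :
    Integrable (fun p : G × G => (u p.2 - u p.1) ^ 2 * γ (p.1 - p.2)) (μ.prod μ) := by
  have hA : Integrable (fun p : G × G => u p.2 ^ 2 * |γ (p.1 - p.2)|) (μ.prod μ) :=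
    hu.integrable_sq.convolution_integrand (ContinuousLinearMap.mul ℝ ℝ) hγ.abs
  have hB : Integrable (fun p : G × G => u p.1 ^ 2 * |γ (p.1 - p.2)|) (μ.prod μ) := by
    simpa only [Function.comp_def, Prod.fst_swap, Prod.snd_swap, neg_sub,
      ContinuousLinearMap.mul_apply'] using
      (hu.integrable_sq.convolution_integrand (ContinuousLinearMap.mul ℝ ℝ)
        hγ.abs.comp_neg).swap
  have hmeas : AEStronglyMeasurable (fun p : G × G => (u p.2 - u p.1) ^ 2 * γ (p.1 - p.2))
      (μ.prod μ) :=
    ((hu.1.comp_snd.sub hu.1.comp_fst).pow 2).mul <|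
      hγ.1.comp_quasiMeasurePreserving (quasiMeasurePreserving_sub_of_right_invariant μ μ)
  refine ((hA.const_mul 2).add (hB.const_mul 2)).mono' hmeas (.of_forall fun p => ?_)
  simp only [Pi.add_apply, norm_mul, norm_pow, Real.norm_eq_abs, sq_abs]
  nlinarith [mul_nonneg (abs_nonneg (γ (p.1 - p.2))) (sq_nonneg (u p.1 + u p.2))]

end ConvolutionKernel

theorem integral_Ioi_mul_integral_sq_le_integral_integral_sq_sub_mul {L : ℝ} {u γ : ℝ → ℝ}
    (hu : MemLp u 2 volume) (hu0 : ∀ᵐ x : ℝ, x ∉ Icc (-L) L → u x = 0) (hγ : Integrable γ)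
    (hγ0 : 0 ≤ γ) :
    (∫ t in Ioi (2 * L), γ t) * ∫ x, u x ^ 2 ≤ ∫ x, ∫ y, (u y - u x) ^ 2 * γ (x - y) := by
  have hf := hu.integrable_sq_sub_mul_comp_sub hγ
  rw [integral_integral_swap hf, ← integral_const_mul]
  refine integral_mono_ae (hu.integrable_sq.const_mul _) hf.integral_prod_right ?_
  filter_upwards [hf.prod_left_ae, hu0] with y hfy hy
  have hf0 : ∀ x, 0 ≤ (u y - u x) ^ 2 * γ (x - y) := fun x => mul_nonneg (sq_nonneg _) (hγ0 _)
  by_cases hyL : y ∈ Icc (-L) L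
  swap
  · calc _ = (0 : ℝ) := by rw [hy hyL]; ring
      _ ≤ _ := integral_nonneg hf0
  have htranslate : ∫ x in Ioi L, γ (x - y) = ∫ t in Ioi (L - y), γ t := by
    simpa [preimage_sub_const_Ioi] using
      (measurePreserving_sub_right volume y).setIntegral_preimage_emb
        (measurableEmbedding_subRight y) γ (Ioi (L - y))
  calc (∫ t in Ioi (2 * L), γ t) * u y ^ 2
      ≤ (∫ t in Ioi (L - y), γ t) * u y ^ 2 :=
        mul_le_mul_of_nonneg_right (setIntegral_mono_set hγ.integrableOn (.of_forall hγ0)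
          (Ioi_subset_Ioi (by linarith [hyL.1])).eventuallyLE) (sq_nonneg _)
    _ = ∫ x in Ioi L, u y ^ 2 * γ (x - y) := by rw [integral_const_mul, htranslate, mul_comm]
    _ = ∫ x in Ioi L, (u y - u x) ^ 2 * γ (x - y) := by
        refine setIntegral_congr_ae measurableSet_Ioi ?_
        filter_upwards [hu0] with x hx hxL
        rw [hx fun h => (mem_Ioi.1 hxL).not_ge h.2, sub_zero]
    _ ≤ ∫ x, (u y - u x) ^ 2 * γ (x - y) := setIntegral_le_integral hfy (.of_forall hf0)

theorem integral_Ioi_pos_of_pos {γ : ℝ → ℝ} (hγ : Integrable γ) (hγpos : ∀ z, 0 < γ z) (a : ℝ) :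
    0 < ∫ t in Ioi a, γ t := by
  rw [setIntegral_pos_iff_support_of_nonneg_ae (.of_forall fun z => (hγpos z).le) hγ.integrableOn,
    (eq_univ_of_forall fun z => (hγpos z).ne' : Function.support γ = univ), univ_inter,
    Real.volume_Ioi]
  exact ENNReal.zero_lt_top

theorem stmt_1_general (L : ℝ) (γ : ℝ → ℝ)
    (hγpos : ∀ z, 0 < γ z)
    (hγi : Integrable γ) :
    ∃ θ > (0 : ℝ), ∀ u : ℝ → ℝ,
      MemLp u 2 volume → (∀ᵐ x : ℝ, x ∉ Icc (-L) L → u x = 0) →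
      (1/2 : ℝ) * (∫ x : ℝ, ∫ y : ℝ, (u y - u x) * γ (x - y) * (u y - u x))
        ≥ θ * ∫ x : ℝ, (u x) ^ 2 := by
  refine ⟨(∫ t in Ioi (2 * L), γ t) / 2, half_pos (integral_Ioi_pos_of_pos hγi hγpos _), ?_⟩
  intro u hu hu0
  have key := integral_Ioi_mul_integral_sq_le_integral_integral_sq_sub_mul hu hu0 hγi
    fun z => (hγpos z).le
  have hsq : ∀ x y, (u y - u x) * γ (x - y) * (u y - u x) = (u y - u x) ^ 2 * γ (x - y) :=
    fun _ _ => by ring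
  simp only [hsq]
  linarith

/-- There exists a constant `θ > 0` such that `B[u, u] ≥ θ ‖u‖²` for all `u ∈ V`. -/
theorem stmt_1 (L : ℝ) (hL : 0 < L) (γ : ℝ → ℝ)
    (hγe : ∀ z, γ (-z) = γ z) (hγpos : ∀ z, 0 < γ z)
    (hγi : Integrable γ) (hγ2 : MemLp γ 2 volume) :
    ∃ θ > (0 : ℝ), ∀ u : ℝ → ℝ,
      MemLp u 2 volume → (∀ᵐ x : ℝ, x ∉ Icc (-L) L → u x = 0) →
      (1/2 : ℝ) * (∫ x : ℝ, ∫ y : ℝ, (u y - u x) * γ (x - y) * (u y - u x))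
        ≥ θ * ∫ x : ℝ, (u x) ^ 2 :=
  stmt_1_general L γ hγpos hγi
end

section
/- For all u, φ ∈ V one has −∫_ℝ (Ku)(x) φ(x) dx = B[u, φ]; that is, −∫_ℝ (Ku)(x) φ(x) dx = (1/2) ∫_ℝ ∫_ℝ (u(y) − u(x)) γ(x − y) (φ(y) − φ(x)) dy dx. -/
/-!
Put `F x y = (u y - u x) * γ (x - y)`. Since `γ` is even, `F` is antisymmetric, so exchanging
the variables turns `∫∫ F x y * φ y` into `-∫∫ F x y * φ x`, whence
`∫∫ F x y * (φ y - φ x) = -2 ∫∫ F x y * φ x`. Fubini applies because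
`|φ x * u y| * |γ (x - y)| ≤ (φ x ^ 2 + u y ^ 2) / 2 * |γ (x - y)|`, which is integrable on the
product as soon as `u, φ ∈ L²` and `γ ∈ L¹`.
-/

open MeasureTheory Set

section Kernel

variable {G : Type*} [AddGroup G] [MeasurableSpace G] [MeasurableAdd₂ G] [MeasurableNeg G]
  {μ : Measure G} [SFinite μ] [μ.IsAddRightInvariant] {γ : G → ℝ}

theorem integrable_snd_mul_comp_sub {f : G → ℝ} (hf : Integrable f μ) (hγ : Integrable γ μ) :
    Integrable (fun p : G × G => f p.2 * γ (p.1 - p.2)) (μ.prod μ) :=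
  hf.convolution_integrand (ContinuousLinearMap.mul ℝ ℝ) hγ

theorem integrable_fst_mul_comp_sub (hγe : ∀ z, γ (-z) = γ z) {f : G → ℝ}
    (hf : Integrable f μ) (hγ : Integrable γ μ) :
    Integrable (fun p : G × G => f p.1 * γ (p.1 - p.2)) (μ.prod μ) := by
  refine (integrable_snd_mul_comp_sub hf hγ).swap.congr (ae_of_all _ fun p => ?_)
  simp only [Function.comp_apply, Prod.fst_swap, Prod.snd_swap]
  rw [← neg_sub p.1 p.2, hγe]

theorem integrable_fst_mul_snd_mul_comp_sub (hγe : ∀ z, γ (-z) = γ z) {g h : G → ℝ}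
    (hg : MemLp g 2 μ) (hh : MemLp h 2 μ) (hγ : Integrable γ μ) :
    Integrable (fun p : G × G => g p.1 * h p.2 * γ (p.1 - p.2)) (μ.prod μ) := by
  have hγ_sub : AEStronglyMeasurable (fun p : G × G => γ (p.1 - p.2)) (μ.prod μ) :=
    (hγ.aestronglyMeasurable.mono_ac
      (quasiMeasurePreserving_sub_of_right_invariant μ μ).absolutelyContinuous).comp_measurable
      measurable_sub
  have hbound :=
    (integrable_fst_mul_comp_sub (fun z => by rw [hγe])
      (hg.integrable_sq.div_const 2) hγ.abs).add
    (integrable_snd_mul_comp_sub (hh.integrable_sq.div_const 2) hγ.abs)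
  refine hbound.mono' ((hg.1.comp_fst.mul hh.1.comp_snd).mul hγ_sub) (ae_of_all _ fun p => ?_)
  have amgm := two_mul_le_add_sq |g p.1| |h p.2|
  simp only [Pi.add_apply, norm_mul, Real.norm_eq_abs, sq_abs] at amgm ⊢
  nlinarith [abs_nonneg (γ (p.1 - p.2))]

end Kernel

theorem integral_integral_mul_sub_of_antisymm {α : Type*} [MeasurableSpace α] {μ : Measure α}
    [SFinite μ] {F : α → α → ℝ} (hF : ∀ x y, F y x = -F x y) {φ : α → ℝ}
    (hi : Integrable (fun p : α × α => F p.1 p.2 * φ p.1) (μ.prod μ)) :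
    ∫ x, ∫ y, F x y * (φ y - φ x) ∂μ ∂μ = -2 * ∫ x, (∫ y, F x y ∂μ) * φ x ∂μ := by
  have hi_swap : Integrable (fun p : α × α => F p.1 p.2 * φ p.2) (μ.prod μ) :=
    hi.swap.neg.congr (ae_of_all _ fun p => by
      simp only [Pi.neg_apply, Function.comp_apply, Prod.fst_swap, Prod.snd_swap, hF p.1 p.2]
      ring)
  have hswap : ∫ p : α × α, F p.1 p.2 * φ p.2 ∂μ.prod μ
      = -∫ p : α × α, F p.1 p.2 * φ p.1 ∂μ.prod μ := by
    rw [← integral_prod_swap, ← integral_neg]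
    congr 1 with p
    simp only [Prod.fst_swap, Prod.snd_swap, hF p.1 p.2]
    ring
  simp_rw [mul_sub, ← integral_mul_const]
  rw [integral_integral (hi_swap.sub hi), integral_integral hi, integral_sub hi_swap hi, hswap]
  ring

theorem stmt_2_general (L : ℝ) (γ : ℝ → ℝ)
    (hγe : ∀ z, γ (-z) = γ z)
    (hγi : Integrable γ) :
    ∀ u φ : ℝ → ℝ,
      MemLp u 2 volume → (∀ᵐ x : ℝ, x ∉ Icc (-L) L → u x = 0) →
      MemLp φ 2 volume → (∀ᵐ x : ℝ, x ∉ Icc (-L) L → φ x = 0) →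
      -(∫ x : ℝ, (∫ y : ℝ, (u y - u x) * γ (x - y)) * φ x)
        = (1/2 : ℝ) * ∫ x : ℝ, ∫ y : ℝ, (u y - u x) * γ (x - y) * (φ y - φ x) := by
  intro u φ hu _ hφ _
  have hF : ∀ x y, (u x - u y) * γ (y - x) = -((u y - u x) * γ (x - y)) := fun x y => by
    rw [← neg_sub x y, hγe]
    ring
  have hi : Integrable (fun p : ℝ × ℝ => (u p.2 - u p.1) * γ (p.1 - p.2) * φ p.1)
      (volume.prod volume) :=
    ((integrable_fst_mul_snd_mul_comp_sub hγe hφ hu hγi).sub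
      (integrable_fst_mul_comp_sub hγe (hu.integrable_mul hφ) hγi)).congr
      (ae_of_all _ fun p => by simp only [Pi.sub_apply, Pi.mul_apply]; ring)
  rw [integral_integral_mul_sub_of_antisymm (F := fun x y => (u y - u x) * γ (x - y)) hF hi]
  ring

/-- For all `u, φ ∈ V` one has `−∫ (Ku) φ = B[u, φ]`. -/
theorem stmt_2 (L : ℝ) (hL : 0 < L) (γ : ℝ → ℝ)
    (hγm : Measurable γ) (hγe : ∀ z, γ (-z) = γ z) (hγ0 : ∀ z, 0 ≤ γ z)
    (hγi : Integrable γ) :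
    ∀ u φ : ℝ → ℝ,
      MemLp u 2 volume → (∀ᵐ x : ℝ, x ∉ Icc (-L) L → u x = 0) →
      MemLp φ 2 volume → (∀ᵐ x : ℝ, x ∉ Icc (-L) L → φ x = 0) →
      -(∫ x : ℝ, (∫ y : ℝ, (u y - u x) * γ (x - y)) * φ x)
        = (1/2 : ℝ) * ∫ x : ℝ, ∫ y : ℝ, (u y - u x) * γ (x - y) * (φ y - φ x) :=
  stmt_2_general L γ hγe hγi
end

section
/- There exists a constant C > 0 such that for every u ∈ V the function Ku is square-integrable on ℝ and ‖Ku‖ ≤ C ‖u‖; that is, K is a bounded linear operator from V into L²(ℝ). -/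
/-!
Pointwise, `|Ku(x)| ≤ (|u| ⋆ |γ|)(x) + ‖γ‖₁ |u(x)|`, by the triangle inequality and translation
invariance of Lebesgue measure. The convolution term obeys Young's inequality
`‖|u| ⋆ |γ|‖₂ ≤ ‖γ‖₁ ‖u‖₂`: Cauchy–Schwarz against the weight `|γ(x - ·)|` gives
`(|u| ⋆ |γ|)(x)² ≤ ‖γ‖₁ (|u|² ⋆ |γ|)(x)`, and Tonelli integrates the right side to `‖γ‖₁² ‖u‖₂²`.
Hence `‖Ku‖₂ ≤ 2 ‖γ‖₁ ‖u‖₂`.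
-/

open MeasureTheory Set
open scoped ENNReal

theorem ENNReal.sq_lintegral_mul_le {α : Type*} [MeasurableSpace α] {μ : Measure α}
    {f w : α → ℝ≥0∞} (hf : AEMeasurable f μ) (hw : AEMeasurable w μ) :
    (∫⁻ a, f a * w a ∂μ) ^ 2 ≤ (∫⁻ a, f a ^ 2 * w a ∂μ) * ∫⁻ a, w a ∂μ := by
  have hsplit (a : α) : f a * w a ^ (2⁻¹ : ℝ) * w a ^ (2⁻¹ : ℝ) = f a * w a := by
    rw [mul_assoc, ← ENNReal.rpow_add_of_nonneg _ _ (by norm_num) (by norm_num)]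
    norm_num
  have holder := ENNReal.lintegral_mul_le_Lp_mul_Lq μ .two_two
    (f := fun a => f a * w a ^ (2⁻¹ : ℝ)) (g := fun a => w a ^ (2⁻¹ : ℝ))
    (hf.mul (hw.pow_const _)) (hw.pow_const _)
  simp only [Pi.mul_apply, hsplit, ENNReal.mul_rpow_of_nonneg _ _ zero_le_two,
    ← ENNReal.rpow_mul] at holder
  norm_num at holder
  calc (∫⁻ a, f a * w a ∂μ) ^ 2
      ≤ ((∫⁻ a, f a ^ 2 * w a ∂μ) ^ (2⁻¹ : ℝ) * (∫⁻ a, w a ∂μ) ^ (2⁻¹ : ℝ)) ^ 2 := by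
        gcongr
        simpa only [one_div] using holder
    _ = (∫⁻ a, f a ^ 2 * w a ∂μ) * ∫⁻ a, w a ∂μ := by
        rw [mul_pow, ← ENNReal.rpow_mul_natCast, ← ENNReal.rpow_mul_natCast]
        norm_num

namespace MeasureTheory

theorem eLpNorm_two_pow_two_eq_lintegral {α : Type*} [MeasurableSpace α] {μ : Measure α}
    (g : α → ℝ≥0∞) : eLpNorm g 2 μ ^ 2 = ∫⁻ x, g x ^ 2 ∂μ := by
  simpa using eLpNorm_nnreal_pow_eq_lintegral (μ := μ) (f := g) (p := 2) two_ne_zero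

noncomputable def nonlocalOp {G : Type*} [Sub G] [MeasurableSpace G] (μ : Measure G)
    (γ u : G → ℝ) (x : G) : ℝ :=
  ∫ y, (u y - u x) * γ (x - y) ∂μ

section

variable {G : Type*} [AddCommGroup G] [MeasurableSpace G] [MeasurableAdd₂ G] [MeasurableNeg G]
  {μ : Measure G} [SFinite μ] [μ.IsAddLeftInvariant]

theorem AEStronglyMeasurable.nonlocalOp {γ u : G → ℝ} (hγ : AEStronglyMeasurable γ μ)
    (hu : AEStronglyMeasurable u μ) : AEStronglyMeasurable (nonlocalOp μ γ u) μ :=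
  ((hu.comp_snd.sub hu.comp_fst).mul
    (hγ.comp_quasiMeasurePreserving (quasiMeasurePreserving_sub μ μ))).integral_prod_right'

variable [μ.IsNegInvariant]

theorem lintegral_lconvolution_sq_le {f k : G → ℝ≥0∞} (hf : AEMeasurable f μ)
    (hk : AEMeasurable k μ) :
    ∫⁻ x, (f ⋆ₗ[μ] k) x ^ 2 ∂μ ≤ (∫⁻ x, k x ∂μ) ^ 2 * ∫⁻ x, f x ^ 2 ∂μ := by
  have hprod : AEMeasurable (fun p : G × G => f p.2 ^ 2 * k (p.1 - p.2)) (μ.prod μ) :=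
    (hf.comp_snd.pow_const 2).mul (hk.comp_quasiMeasurePreserving (quasiMeasurePreserving_sub μ μ))
  have inner (y : G) : ∫⁻ x, f y ^ 2 * k (x - y) ∂μ = f y ^ 2 * ∫⁻ x, k x ∂μ := by
    rw [lintegral_const_mul'' _ ?_, lintegral_sub_right_eq_self]
    exact hk.comp_quasiMeasurePreserving (measurePreserving_sub_right μ y).quasiMeasurePreserving
  calc ∫⁻ x, (f ⋆ₗ[μ] k) x ^ 2 ∂μ = ∫⁻ x, (∫⁻ y, f y * k (x - y) ∂μ) ^ 2 ∂μ := by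
        simp only [lconvolution_def, neg_add_eq_sub]
    _ ≤ ∫⁻ x, (∫⁻ y, f y ^ 2 * k (x - y) ∂μ) * ∫⁻ x, k x ∂μ ∂μ := by
        refine lintegral_mono fun x => ?_
        rw [← lintegral_sub_left_eq_self k x]
        exact ENNReal.sq_lintegral_mul_le hf
          (hk.comp_quasiMeasurePreserving (quasiMeasurePreserving_sub_left μ x))
    _ = (∫⁻ y, ∫⁻ x, f y ^ 2 * k (x - y) ∂μ ∂μ) * ∫⁻ x, k x ∂μ := by
        rw [lintegral_mul_const'' _ hprod.lintegral_prod_right', lintegral_lintegral_swap hprod]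
    _ = (∫⁻ x, k x ∂μ) ^ 2 * ∫⁻ x, f x ^ 2 ∂μ := by
        simp_rw [inner]
        rw [lintegral_mul_const'' _ (hf.pow_const 2)]
        ring

theorem eLpNorm_lconvolution_le {f k : G → ℝ≥0∞} (hf : AEMeasurable f μ)
    (hk : AEMeasurable k μ) :
    eLpNorm (f ⋆ₗ[μ] k) 2 μ ≤ eLpNorm k 1 μ * eLpNorm f 2 μ := by
  rw [← ENNReal.pow_le_pow_left_iff two_ne_zero, mul_pow, eLpNorm_two_pow_two_eq_lintegral,
    eLpNorm_two_pow_two_eq_lintegral, eLpNorm_one_eq_lintegral_enorm]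
  exact lintegral_lconvolution_sq_le hf hk

variable {γ u : G → ℝ}

theorem enorm_nonlocalOp_le (hγ : AEMeasurable γ μ) (u : G → ℝ) (x : G) :
    ‖nonlocalOp μ γ u x‖ₑ ≤ ((‖u ·‖ₑ) ⋆ₗ[μ] (‖γ ·‖ₑ)) x + eLpNorm γ 1 μ * ‖u x‖ₑ := by
  have hγx : AEMeasurable (fun y => ‖γ (x - y)‖ₑ) μ :=
    hγ.enorm.comp_quasiMeasurePreserving (quasiMeasurePreserving_sub_left μ x)
  calc ‖nonlocalOp μ γ u x‖ₑ ≤ ∫⁻ y, ‖u y - u x‖ₑ * ‖γ (x - y)‖ₑ ∂μ := by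
        simpa only [nonlocalOp, enorm_mul] using
          enorm_integral_le_lintegral_enorm (fun y => (u y - u x) * γ (x - y))
    _ ≤ ∫⁻ y, ‖u y‖ₑ * ‖γ (x - y)‖ₑ + ‖u x‖ₑ * ‖γ (x - y)‖ₑ ∂μ := by
        gcongr with y
        rw [← add_mul]
        gcongr
        exact enorm_sub_le
    _ = ((‖u ·‖ₑ) ⋆ₗ[μ] (‖γ ·‖ₑ)) x + eLpNorm γ 1 μ * ‖u x‖ₑ := by
        rw [lintegral_add_right' _ (hγx.const_mul _), lintegral_const_mul' _ _ enorm_ne_top,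
          lintegral_sub_left_eq_self (‖γ ·‖ₑ), eLpNorm_one_eq_lintegral_enorm, mul_comm]
        simp only [lconvolution_def, neg_add_eq_sub]

theorem eLpNorm_nonlocalOp_le (hγ : Integrable γ μ) (hu : AEStronglyMeasurable u μ) :
    eLpNorm (nonlocalOp μ γ u) 2 μ ≤ 2 * eLpNorm γ 1 μ * eLpNorm u 2 μ := by
  set A := eLpNorm γ 1 μ
  have hA : A ≠ ⊤ := (memLp_one_iff_integrable.2 hγ).eLpNorm_ne_top
  have hconv : AEMeasurable ((‖u ·‖ₑ) ⋆ₗ[μ] (‖γ ·‖ₑ)) μ :=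
    aemeasurable_lconvolution hu.enorm hγ.1.enorm
  calc eLpNorm (nonlocalOp μ γ u) 2 μ
      ≤ eLpNorm (((‖u ·‖ₑ) ⋆ₗ[μ] (‖γ ·‖ₑ)) + fun x => A * ‖u x‖ₑ) 2 μ :=
        eLpNorm_mono_enorm fun x => enorm_nonlocalOp_le hγ.1.aemeasurable u x
    _ ≤ eLpNorm ((‖u ·‖ₑ) ⋆ₗ[μ] (‖γ ·‖ₑ)) 2 μ + eLpNorm (fun x => A * ‖u x‖ₑ) 2 μ :=
        eLpNorm_add_le hconv.aestronglyMeasurable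
          (hu.enorm.const_mul A).aestronglyMeasurable one_le_two
    _ ≤ A * eLpNorm u 2 μ + A * eLpNorm u 2 μ := by
        gcongr
        · simpa only [eLpNorm_enorm] using eLpNorm_lconvolution_le hu.enorm hγ.1.enorm
        · simpa [ENNReal.coe_toNNReal hA, ENNReal.smul_def, eLpNorm_enorm] using
            eLpNorm_le_nnreal_smul_eLpNorm_of_ae_le_mul' (μ := μ) (p := 2)
              (f := fun x => A * ‖u x‖ₑ) (g := u) (c := A.toNNReal)
              (.of_forall fun x => by simp [ENNReal.coe_toNNReal hA])
    _ = 2 * A * eLpNorm u 2 μ := by ring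

theorem MemLp.nonlocalOp (hγ : Integrable γ μ) (hu : MemLp u 2 μ) :
    MemLp (nonlocalOp μ γ u) 2 μ := by
  refine ⟨hγ.1.nonlocalOp hu.1, (eLpNorm_nonlocalOp_le hγ hu.1).trans_lt ?_⟩
  have := (memLp_one_iff_integrable.2 hγ).eLpNorm_ne_top
  have := hu.eLpNorm_ne_top
  finiteness

end

end MeasureTheory

theorem stmt_4_general (L : ℝ) (γ : ℝ → ℝ)
    (hγi : Integrable γ) :
    ∃ C > (0 : ℝ), ∀ u : ℝ → ℝ,
      MemLp u 2 volume → (∀ᵐ x : ℝ, x ∉ Icc (-L) L → u x = 0) →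
      MemLp (fun x => ∫ y : ℝ, (u y - u x) * γ (x - y)) 2 volume ∧
      (eLpNorm (fun x => ∫ y : ℝ, (u y - u x) * γ (x - y)) 2 volume).toReal
        ≤ C * (eLpNorm u 2 volume).toReal := by
  have hγ1 := (memLp_one_iff_integrable.2 hγi).eLpNorm_ne_top
  refine ⟨2 * (eLpNorm γ 1 volume).toReal + 1, by positivity, fun u hu _ => ?_⟩
  have hu2 := hu.eLpNorm_ne_top
  refine ⟨hu.nonlocalOp hγi, ?_⟩
  calc (eLpNorm (nonlocalOp volume γ u) 2 volume).toReal
      ≤ (2 * eLpNorm γ 1 volume * eLpNorm u 2 volume).toReal :=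
        ENNReal.toReal_mono (by finiteness) (eLpNorm_nonlocalOp_le hγi hu.1)
    _ = 2 * (eLpNorm γ 1 volume).toReal * (eLpNorm u 2 volume).toReal := by
        simp only [ENNReal.toReal_mul, ENNReal.toReal_ofNat]
    _ ≤ (2 * (eLpNorm γ 1 volume).toReal + 1) * (eLpNorm u 2 volume).toReal := by
        gcongr
        linarith

/-- `K` is a bounded linear operator from `V` into `L²(ℝ)`. -/
theorem stmt_4 (L : ℝ) (hL : 0 < L) (γ : ℝ → ℝ)
    (hγm : Measurable γ) (hγe : ∀ z, γ (-z) = γ z) (hγ0 : ∀ z, 0 ≤ γ z)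
    (hγi : Integrable γ) :
    ∃ C > (0 : ℝ), ∀ u : ℝ → ℝ,
      MemLp u 2 volume → (∀ᵐ x : ℝ, x ∉ Icc (-L) L → u x = 0) →
      MemLp (fun x => ∫ y : ℝ, (u y - u x) * γ (x - y)) 2 volume ∧
      (eLpNorm (fun x => ∫ y : ℝ, (u y - u x) * γ (x - y)) 2 volume).toReal
        ≤ C * (eLpNorm u 2 volume).toReal :=
  stmt_4_general L γ hγi
end

section
/- If u ∈ V and (Ku)(x) = 0 for almost every x ∈ ℝ, then u = 0 almost everywhere on ℝ; that is, the operator K has trivial kernel on V. -/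
/-!
Write `c = ∫ γ`. Since `u` is integrable, `Ku = 0` says `∫ u(y) γ(x - y) dy = c u(x)` for a.e. `x`.
Expanding the square, the nonlocal energy `∫∫ (u(y) - u(x))² γ(x - y) dy dx` equals
`∫ (u² ⋆ γ) - 2 ∫ u (u ⋆ γ) + c ∫ u² = c ∫ u² - 2c ∫ u² + c ∫ u² = 0`.
Its integrand is nonnegative and `γ > 0`, so `u(y) = u(x)` for a.e. pair `(x, y)`: `u` is a.e.
constant, and that constant is `0` because `u` vanishes on `(L, ∞)`, a set of positive measure.
-/

open MeasureTheory Set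

theorem MeasureTheory.MemLp.integrable_of_ae_notMem_eq_zero {α E : Type*} [MeasurableSpace α]
    {μ : Measure α} [NormedAddCommGroup E] {p : ENNReal} {f : α → E} {s : Set α}
    (hf : MemLp f p μ) (hp : 1 ≤ p) (hs : μ s ≠ ⊤) (hsupp : ∀ᵐ x ∂μ, x ∉ s → f x = 0) :
    Integrable f μ :=
  have := isFiniteMeasure_restrict.2 hs
  IntegrableOn.integrable_of_ae_notMem_eq_zero ((hf.restrict s).integrable hp) hsupp

theorem ae_eq_of_ae_ae_eq {α β : Type*} [MeasurableSpace α] {μ : Measure α} {u : α → β} {c : β}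
    {s : Set α} (hconst : ∀ᵐ x ∂μ, ∀ᵐ y ∂μ, u y = u x) (hs : μ s ≠ 0)
    (hc : ∀ᵐ y ∂μ, y ∈ s → u y = c) : ∀ᵐ x ∂μ, u x = c := by
  filter_upwards [hconst] with x hx
  obtain ⟨y, hys, hyx, hyc⟩ :=
    Measure.exists_mem_of_measure_ne_zero_of_ae hs (ae_restrict_of_ae (hx.and hc))
  rw [← hyx, hyc hys]

section NonlocalEnergy

variable {u γ : ℝ → ℝ}

theorem integral_sub_mul_comp_sub {x : ℝ} (hux : Integrable fun y => u y * γ (x - y))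
    (hγ : Integrable γ) :
    ∫ y, (u y - u x) * γ (x - y) = (∫ y, u y * γ (x - y)) - u x * ∫ z, γ z := by
  rw [← integral_sub_left_eq_self γ volume x, ← integral_const_mul,
    ← integral_sub hux ((hγ.comp_sub_left x).const_mul _)]
  congr 1 with y
  ring

theorem sq_sub_mul_eq (a b g : ℝ) :
    (b - a) ^ 2 * g = b ^ 2 * g - 2 * a * (b * g) + a ^ 2 * g := by
  ring

theorem integrable_sq_sub_mul_comp_sub {x : ℝ} (h1 : Integrable fun y => u y * γ (x - y))
    (h2 : Integrable fun y => u y ^ 2 * γ (x - y)) (hγ : Integrable γ) :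
    Integrable fun y => (u y - u x) ^ 2 * γ (x - y) := by
  simp_rw [sq_sub_mul_eq]
  exact (h2.sub (h1.const_mul _)).add ((hγ.comp_sub_left x).const_mul _)

theorem integral_sq_sub_mul_comp_sub {x : ℝ} (h1 : Integrable fun y => u y * γ (x - y))
    (h2 : Integrable fun y => u y ^ 2 * γ (x - y)) (hγ : Integrable γ) :
    ∫ y, (u y - u x) ^ 2 * γ (x - y) =
      (∫ y, u y ^ 2 * γ (x - y)) - 2 * u x * (∫ y, u y * γ (x - y)) + u x ^ 2 * ∫ z, γ z := by
  have h21 : Integrable fun y => u y ^ 2 * γ (x - y) - 2 * u x * (u y * γ (x - y)) :=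
    h2.sub (h1.const_mul _)
  simp_rw [sq_sub_mul_eq]
  rw [integral_add h21 ((hγ.comp_sub_left x).const_mul _), integral_sub h2 (h1.const_mul _),
    integral_const_mul, integral_const_mul, integral_sub_left_eq_self γ volume x]

variable (hu : Integrable u) (hu2 : Integrable fun x => u x ^ 2) (hγ : Integrable γ)
  (hK : ∀ᵐ x, ∫ y, (u y - u x) * γ (x - y) = 0)
include hu hγ hK

theorem ae_integral_mul_comp_sub_eq :
    ∀ᵐ x, ∫ y, u y * γ (x - y) = (∫ z, γ z) * u x := by
  filter_upwards [hK, hu.ae_convolution_exists (ContinuousLinearMap.mul ℝ ℝ) hγ] with x hx h1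
  rw [integral_sub_mul_comp_sub h1 hγ] at hx
  linarith

include hu2

theorem integral_sq_sub_mul_comp_sub_ae_eq :
    (fun x => ∫ y, (u y - u x) ^ 2 * γ (x - y)) =ᵐ[volume]
      fun x => (∫ y, u y ^ 2 * γ (x - y)) - (∫ z, γ z) * u x ^ 2 := by
  filter_upwards [ae_integral_mul_comp_sub_eq hu hγ hK,
    hu.ae_convolution_exists (ContinuousLinearMap.mul ℝ ℝ) hγ,
    hu2.ae_convolution_exists (ContinuousLinearMap.mul ℝ ℝ) hγ] with x hx h1 h2
  rw [integral_sq_sub_mul_comp_sub h1 h2 hγ, hx]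
  ring

theorem integrable_integral_sq_sub_mul_comp_sub :
    Integrable fun x => ∫ y, (u y - u x) ^ 2 * γ (x - y) :=
  ((hu2.integrable_convolution (ContinuousLinearMap.mul ℝ ℝ) hγ).sub
    (hu2.const_mul _)).congr (integral_sq_sub_mul_comp_sub_ae_eq hu hu2 hγ hK).symm

theorem integral_integral_sq_sub_mul_comp_sub_eq_zero :
    ∫ x, ∫ y, (u y - u x) ^ 2 * γ (x - y) = 0 := by
  have hconv : Integrable fun x => ∫ y, u y ^ 2 * γ (x - y) :=
    hu2.integrable_convolution (ContinuousLinearMap.mul ℝ ℝ) hγ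
  have hfubini : ∫ x, ∫ y, u y ^ 2 * γ (x - y) = (∫ x, u x ^ 2) * ∫ z, γ z :=
    integral_convolution (ContinuousLinearMap.mul ℝ ℝ) hu2 hγ
  rw [integral_congr_ae (integral_sq_sub_mul_comp_sub_ae_eq hu hu2 hγ hK),
    integral_sub hconv (hu2.const_mul _), integral_const_mul, hfubini]
  ring

theorem ae_ae_eq_of_integral_sub_mul_comp_sub_eq_zero (hγpos : ∀ z, 0 < γ z) :
    ∀ᵐ x, ∀ᵐ y, u y = u x := by
  have hnonneg : ∀ x y, 0 ≤ (u y - u x) ^ 2 * γ (x - y) := fun x y =>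
    mul_nonneg (sq_nonneg _) (hγpos _).le
  have henergy : (fun x => ∫ y, (u y - u x) ^ 2 * γ (x - y)) =ᵐ[volume] 0 :=
    (integral_eq_zero_iff_of_nonneg (fun x => integral_nonneg (hnonneg x))
      (integrable_integral_sq_sub_mul_comp_sub hu hu2 hγ hK)).1
      (integral_integral_sq_sub_mul_comp_sub_eq_zero hu hu2 hγ hK)
  filter_upwards [henergy, hu.ae_convolution_exists (ContinuousLinearMap.mul ℝ ℝ) hγ,
    hu2.ae_convolution_exists (ContinuousLinearMap.mul ℝ ℝ) hγ] with x hx h1 h2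
  have hzero := (integral_eq_zero_iff_of_nonneg (hnonneg x)
    (integrable_sq_sub_mul_comp_sub h1 h2 hγ)).1 hx
  filter_upwards [hzero] with y hy
  simpa [(hγpos (x - y)).ne', sub_eq_zero] using hy

end NonlocalEnergy

theorem stmt_6_general (L : ℝ) (γ : ℝ → ℝ)
    (hγi : Integrable γ) (hγpos : ∀ z, 0 < γ z) :
    ∀ u : ℝ → ℝ,
      MemLp u 2 volume → (∀ᵐ x : ℝ, x ∉ Icc (-L) L → u x = 0) →
      (∀ᵐ x : ℝ, (∫ y : ℝ, (u y - u x) * γ (x - y)) = 0) →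
      (∀ᵐ x : ℝ, u x = 0) := by
  intro u hu hsupp hK
  have hu1 : Integrable u := hu.integrable_of_ae_notMem_eq_zero one_le_two (by simp) hsupp
  refine ae_eq_of_ae_ae_eq
    (ae_ae_eq_of_integral_sub_mul_comp_sub_eq_zero hu1 hu.integrable_sq hγi hK hγpos)
    (s := Ioi L) (by simp) ?_
  filter_upwards [hsupp] with y hy hyL
  exact hy fun h => (not_le.2 hyL) h.2

/-- The operator `K` has trivial kernel on `V`. -/
theorem stmt_6 (L : ℝ) (hL : 0 < L) (γ : ℝ → ℝ)
    (hγm : Measurable γ) (hγe : ∀ z, γ (-z) = γ z)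
    (hγi : Integrable γ) (hγpos : ∀ z, 0 < γ z) :
    ∀ u : ℝ → ℝ,
      MemLp u 2 volume → (∀ᵐ x : ℝ, x ∉ Icc (-L) L → u x = 0) →
      (∀ᵐ x : ℝ, (∫ y : ℝ, (u y - u x) * γ (x - y)) = 0) →
      (∀ᵐ x : ℝ, u x = 0) :=
  stmt_6_general L γ hγi hγpos
end

section
/- For every square-integrable function f : Ω → ℝ there exists a square-integrable function u : Ω → ℝ, unique up to equality almost everywhere, such that Γ u(x) − ∫_Ω γ(x − y) u(y) dy = f(x) for almost every x ∈ Ω; that is, the operator u ↦ Γu − γ∗u is a bijection of L²(Ω). -/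
/-!
For `x, y ∈ Ω` we have `x - y ∈ [-2L, 2L]`, so every row and every column of the kernel
`γ (x - y)` on `Ω × Ω` has mass at most `c = ∫_{[-2L, 2L]} γ`. By Schur's test (Cauchy–Schwarz
in each row, then Tonelli and the column bound) the operator `K u x = ∫_Ω γ (x - y) u y dy` has
norm at most `c` on `L²(Ω)`, and `c < Γ` because `γ > 0` off `[-2L, 2L]`. Hence
`u ↦ Γ⁻¹ (f + K u)` is a contraction of `L²(Ω)`, and its fixed points are exactly the solutions
of `Γ u - K u = f`.
-/

open MeasureTheory Set Function
open scoped ENNReal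

section Schur

variable {α : Type*} [MeasurableSpace α] {μ : Measure α}

theorem sq_lintegral_mul_le {G V : α → ℝ≥0∞} (hG : AEMeasurable G μ) (hV : AEMeasurable V μ) :
    (∫⁻ a, G a * V a ∂μ) ^ 2 ≤ (∫⁻ a, G a ∂μ) * ∫⁻ a, G a * V a ^ 2 ∂μ := by
  have key := ENNReal.lintegral_mul_norm_pow_le (g := fun a => G a * V a ^ 2) hG
    (hG.mul (hV.pow_const 2)) (p := 1 / 2) (q := 1 / 2) (by norm_num) (by norm_num) (by norm_num)
  have hsqrt : ∀ x : ℝ≥0∞, x ^ (1 / 2 : ℝ) * x ^ (1 / 2 : ℝ) = x := fun x => by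
    rw [← ENNReal.rpow_add_of_nonneg _ _ (by norm_num) (by norm_num)]; norm_num
  have hint : ∀ a, G a ^ (1 / 2 : ℝ) * (G a * V a ^ 2) ^ (1 / 2 : ℝ) = G a * V a := fun a => by
    rw [ENNReal.mul_rpow_of_nonneg _ _ (by norm_num), ← ENNReal.rpow_two, ← ENNReal.rpow_mul,
      ← mul_assoc, hsqrt]
    norm_num
  simp only [hint] at key
  calc (∫⁻ a, G a * V a ∂μ) ^ 2
      ≤ ((∫⁻ a, G a ∂μ) ^ (1 / 2 : ℝ) * (∫⁻ a, G a * V a ^ 2 ∂μ) ^ (1 / 2 : ℝ)) ^ 2 := by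
        gcongr
    _ = (∫⁻ a, G a ∂μ) * ∫⁻ a, G a * V a ^ 2 ∂μ := by
        rw [mul_pow, sq, sq, hsqrt, hsqrt]

theorem eLpNorm_two_sq_eq_lintegral (f : α → ℝ) : eLpNorm f 2 μ ^ 2 = ∫⁻ x, ‖f x‖ₑ ^ 2 ∂μ := by
  simpa [ENNReal.rpow_two] using
    eLpNorm_nnreal_pow_eq_lintegral (f := f) (μ := μ) (p := 2) two_ne_zero

variable [SFinite μ]

theorem lintegral_sq_lintegral_mul_le_of_row_col {G : α → α → ℝ≥0∞} {V : α → ℝ≥0∞} {C : ℝ≥0∞}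
    (hG : AEMeasurable (uncurry G) (μ.prod μ)) (hV : AEMeasurable V μ)
    (hrow : ∀ᵐ x ∂μ, ∫⁻ y, G x y ∂μ ≤ C) (hcol : ∀ᵐ y ∂μ, ∫⁻ x, G x y ∂μ ≤ C) :
    ∫⁻ x, (∫⁻ y, G x y * V y ∂μ) ^ 2 ∂μ ≤ C ^ 2 * ∫⁻ y, V y ^ 2 ∂μ := by
  have hGV : AEMeasurable (uncurry fun x y => G x y * V y ^ 2) (μ.prod μ) :=
    hG.mul (hV.pow_const 2).comp_snd
  calc ∫⁻ x, (∫⁻ y, G x y * V y ∂μ) ^ 2 ∂μ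
      ≤ ∫⁻ x, C * ∫⁻ y, G x y * V y ^ 2 ∂μ ∂μ := by
        refine lintegral_mono_ae ?_
        filter_upwards [hrow, hG.aestronglyMeasurable.prodMk_left] with x hx hGx
        exact (sq_lintegral_mul_le (G := G x) hGx.aemeasurable hV).trans (by gcongr)
    _ = C * ∫⁻ y, (∫⁻ x, G x y ∂μ) * V y ^ 2 ∂μ := by
        rw [lintegral_const_mul'' (f := fun x => ∫⁻ y, G x y * V y ^ 2 ∂μ) _
          hGV.lintegral_prod_right', lintegral_lintegral_swap hGV]
        congr 1
        refine lintegral_congr_ae ?_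
        filter_upwards [hG.aestronglyMeasurable.prodMk_right] with y hGy
        exact lintegral_mul_const'' _ hGy.aemeasurable
    _ ≤ C * ∫⁻ y, C * V y ^ 2 ∂μ := by
        refine mul_le_mul_right (lintegral_mono_ae ?_) C
        filter_upwards [hcol] with y hy
        gcongr
    _ = C ^ 2 * ∫⁻ y, V y ^ 2 ∂μ := by
        rw [lintegral_const_mul'' _ (hV.pow_const 2), ← mul_assoc, sq]

section IntegralOperator

variable {k : α → α → ℝ} {C : ℝ≥0∞} (hk : AEStronglyMeasurable (uncurry k) (μ.prod μ))
  (hrow : ∀ᵐ x ∂μ, ∫⁻ y, ‖k x y‖ₑ ∂μ ≤ C) (hcol : ∀ᵐ y ∂μ, ∫⁻ x, ‖k x y‖ₑ ∂μ ≤ C)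
include hk hrow hcol

theorem lintegral_sq_lintegral_enorm_mul_le {v : α → ℝ} (hv : AEStronglyMeasurable v μ) :
    ∫⁻ x, (∫⁻ y, ‖k x y * v y‖ₑ ∂μ) ^ 2 ∂μ ≤ (C * eLpNorm v 2 μ) ^ 2 := by
  simp only [enorm_mul]
  rw [mul_pow, eLpNorm_two_sq_eq_lintegral]
  exact lintegral_sq_lintegral_mul_le_of_row_col hk.enorm hv.enorm hrow hcol

theorem eLpNorm_integral_mul_le {v : α → ℝ} (hv : AEStronglyMeasurable v μ) :
    eLpNorm (fun x => ∫ y, k x y * v y ∂μ) 2 μ ≤ C * eLpNorm v 2 μ := by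
  rw [← ENNReal.pow_le_pow_left_iff two_ne_zero, eLpNorm_two_sq_eq_lintegral]
  refine le_trans ?_ (lintegral_sq_lintegral_enorm_mul_le hk hrow hcol hv)
  gcongr with x
  exact enorm_integral_le_lintegral_enorm _

theorem ae_integrable_mul {v : α → ℝ} (hv : MemLp v 2 μ) (hC : C ≠ ⊤) :
    ∀ᵐ x ∂μ, Integrable (fun y => k x y * v y) μ := by
  have hfin : ∫⁻ x, (∫⁻ y, ‖k x y * v y‖ₑ ∂μ) ^ 2 ∂μ ≠ ⊤ :=
    ((lintegral_sq_lintegral_enorm_mul_le hk hrow hcol hv.1).trans_lt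
      (ENNReal.pow_lt_top (ENNReal.mul_lt_top hC.lt_top hv.2))).ne
  have hmeas : AEMeasurable (fun x => (∫⁻ y, ‖k x y * v y‖ₑ ∂μ) ^ 2) μ :=
    ((hk.mul hv.1.comp_snd).enorm.lintegral_prod_right').pow_const 2
  filter_upwards [ae_lt_top' hmeas hfin, hk.prodMk_left] with x hx hkx
  exact ⟨hkx.mul hv.1, (ENNReal.pow_lt_top_iff.1 hx).resolve_right two_ne_zero⟩

theorem memLp_integral_mul (hC : C ≠ ⊤) {v : α → ℝ} (hv : MemLp v 2 μ) :
    MemLp (fun x => ∫ y, k x y * v y ∂μ) 2 μ :=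
  ⟨(hk.mul hv.1.comp_snd).integral_prod_right',
    (eLpNorm_integral_mul_le hk hrow hcol hv.1).trans_lt (ENNReal.mul_lt_top hC.lt_top hv.2)⟩

theorem eLpNorm_integral_mul_sub_le (hC : C ≠ ⊤) {u v : α → ℝ} (hu : MemLp u 2 μ)
    (hv : MemLp v 2 μ) :
    eLpNorm (fun x => (∫ y, k x y * u y ∂μ) - ∫ y, k x y * v y ∂μ) 2 μ ≤
      C * eLpNorm (u - v) 2 μ := by
  have hlin : (fun x => (∫ y, k x y * u y ∂μ) - ∫ y, k x y * v y ∂μ) =ᵐ[μ]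
      fun x => ∫ y, k x y * (u - v) y ∂μ := by
    filter_upwards [ae_integrable_mul hk hrow hcol hu hC, ae_integrable_mul hk hrow hcol hv hC]
      with x hux hvx
    simp only [Pi.sub_apply, mul_sub]
    exact (integral_sub hux hvx).symm
  rw [eLpNorm_congr_ae hlin]
  exact eLpNorm_integral_mul_le hk hrow hcol (hu.1.sub hv.1)

theorem lipschitzWith_toLp_integral_mul (hC : C ≠ ⊤) :
    LipschitzWith C.toNNReal fun w : Lp ℝ 2 μ =>
      (memLp_integral_mul hk hrow hcol hC (Lp.memLp w)).toLp := fun w w' => by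
  rw [Lp.edist_toLp_toLp, Lp.edist_def, ENNReal.coe_toNNReal hC]
  exact eLpNorm_integral_mul_sub_le hk hrow hcol hC (Lp.memLp w) (Lp.memLp w')

theorem exists_unique_mul_sub_integral_mul_eq {a : ℝ} (haC : C < ‖a‖ₑ) {f : α → ℝ}
    (hf : MemLp f 2 μ) :
    ∃ u : α → ℝ, MemLp u 2 μ ∧ (∀ᵐ x ∂μ, a * u x - ∫ y, k x y * u y ∂μ = f x) ∧
      ∀ u' : α → ℝ, MemLp u' 2 μ → (∀ᵐ x ∂μ, a * u' x - ∫ y, k x y * u' y ∂μ = f x) →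
        u' =ᵐ[μ] u := by
  have ha : ‖a‖ₑ ≠ 0 := (zero_le.trans_lt haC).ne'
  have hC : C ≠ ⊤ := (haC.trans_le le_top).ne
  let K : Lp ℝ 2 μ → Lp ℝ 2 μ := fun w =>
    (memLp_integral_mul hk hrow hcol hC (Lp.memLp w)).toLp
  let T : Lp ℝ 2 μ → Lp ℝ 2 μ := fun w => a⁻¹ • (hf.toLp f + K w)
  have hT : ContractingWith (C / ‖a‖ₑ).toNNReal T := by
    rw [ContractingWith, ← ENNReal.coe_lt_coe, ENNReal.coe_toNNReal (ENNReal.div_ne_top hC ha),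
      ENNReal.coe_one, ENNReal.div_lt_iff (Or.inl ha) (Or.inr hC), one_mul]
    refine ⟨haC, fun w w' => ?_⟩
    calc edist (T w) (T w') = ‖a‖ₑ⁻¹ * edist (K w) (K w') := by
          rw [edist_smul₀, edist_add_left, ENNReal.smul_def, smul_eq_mul, nnnorm_inv,
            ENNReal.coe_inv (by simpa using ha)]
          rfl
      _ ≤ ‖a‖ₑ⁻¹ * (C * edist w w') := by
          grw [lipschitzWith_toLp_integral_mul hk hrow hcol hC w w', ENNReal.coe_toNNReal hC]
      _ = (C / ‖a‖ₑ).toNNReal * edist w w' := by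
          rw [ENNReal.coe_toNNReal (ENNReal.div_ne_top hC ha), ← mul_assoc,
            ENNReal.div_eq_inv_mul]
  have hTu : ∀ u (hu : MemLp u 2 μ),
      ⇑(T (hu.toLp u)) =ᵐ[μ] fun x => a⁻¹ * (f x + ∫ y, k x y * u y ∂μ) := by
    intro u hu
    have hK : ∀ x, ∫ y, k x y * hu.toLp u y ∂μ = ∫ y, k x y * u y ∂μ := fun x =>
      integral_congr_ae (hu.coeFn_toLp.mono fun y hy => congrArg (k x y * ·) hy)
    filter_upwards [Lp.coeFn_smul a⁻¹ (hf.toLp f + K (hu.toLp u)),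
      Lp.coeFn_add (hf.toLp f) (K (hu.toLp u)), hf.coeFn_toLp,
      (memLp_integral_mul hk hrow hcol hC (Lp.memLp (hu.toLp u))).coeFn_toLp] with x h1 h2 h3 h4
    rw [h1, Pi.smul_apply, h2, Pi.add_apply, h3, h4, hK x, smul_eq_mul]
  have hfix : ∀ u (hu : MemLp u 2 μ),
      IsFixedPt T (hu.toLp u) ↔ ∀ᵐ x ∂μ, a * u x - ∫ y, k x y * u y ∂μ = f x := by
    intro u hu
    have ha' : a ≠ 0 := by simpa using ha
    rw [IsFixedPt, Lp.ext_iff]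
    refine ⟨fun h => ?_, fun h => ?_⟩
    · filter_upwards [hTu u hu, h, hu.coeFn_toLp] with x h1 h2 h3
      rw [h1, h3, inv_mul_eq_iff_eq_mul₀ ha'] at h2
      linarith
    · filter_upwards [hTu u hu, h, hu.coeFn_toLp] with x h1 h2 h3
      rw [h1, h3, inv_mul_eq_iff_eq_mul₀ ha']
      linarith
  refine ⟨(ContractingWith.fixedPoint T hT : Lp ℝ 2 μ), Lp.memLp _, ?_, fun u' hu' hu'eq => ?_⟩
  · rw [← hfix _ (Lp.memLp _), Lp.toLp_coeFn]
    exact hT.fixedPoint_isFixedPt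
  · rw [← hT.fixedPoint_unique ((hfix u' hu').2 hu'eq)]
    exact hu'.coeFn_toLp.symm

end IntegralOperator

end Schur

section Translation

variable {G : Type*} [MeasurableSpace G] [AddGroup G] {μ : Measure G}

theorem setLIntegral_comp_sub_left_le [MeasurableAdd G] [MeasurableNeg G] [μ.IsNegInvariant]
    [μ.IsAddLeftInvariant] (g : G → ℝ≥0∞) {s t : Set G} {x : G} (hst : ∀ y ∈ s, x - y ∈ t) :
    ∫⁻ y in s, g (x - y) ∂μ ≤ ∫⁻ z in t, g z ∂μ :=
  calc ∫⁻ y in s, g (x - y) ∂μ ≤ ∫⁻ y in (x - ·) ⁻¹' t, g (x - y) ∂μ := lintegral_mono_set hst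
    _ = ∫⁻ z in t, g z ∂μ :=
      (Measure.measurePreserving_sub_left μ x).setLIntegral_comp_preimage_emb
        (measurableEmbedding_subLeft x) g t

theorem setLIntegral_comp_sub_right_le [MeasurableAdd G] [μ.IsAddRightInvariant] (g : G → ℝ≥0∞)
    {s t : Set G} {y : G} (hst : ∀ x ∈ s, x - y ∈ t) :
    ∫⁻ x in s, g (x - y) ∂μ ≤ ∫⁻ z in t, g z ∂μ :=
  calc ∫⁻ x in s, g (x - y) ∂μ ≤ ∫⁻ x in (· - y) ⁻¹' t, g (x - y) ∂μ := lintegral_mono_set hst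
    _ = ∫⁻ z in t, g z ∂μ :=
      (measurePreserving_sub_right μ y).setLIntegral_comp_preimage_emb
        (measurableEmbedding_subRight y) g t

theorem MeasureTheory.AEStronglyMeasurable.comp_sub_prod_restrict [MeasurableAdd₂ G]
    [MeasurableNeg G] [SFinite μ] [μ.IsAddLeftInvariant] {E : Type*} [TopologicalSpace E]
    {γ : G → E} (hγ : AEStronglyMeasurable γ μ) (s t : Set G) :
    AEStronglyMeasurable (uncurry fun x y => γ (x - y)) ((μ.restrict s).prod (μ.restrict t)) := by
  rw [Measure.prod_restrict]
  exact (hγ.comp_quasiMeasurePreserving (quasiMeasurePreserving_sub μ μ)).restrict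

end Translation

theorem setLIntegral_enorm_lt_enorm_integral {α : Type*} [MeasurableSpace α] {μ : Measure α}
    {g : α → ℝ} (hgi : Integrable g μ) (hgpos : ∀ x, 0 < g x) {s : Set α} (hs : MeasurableSet s)
    (hsc : μ sᶜ ≠ 0) :
    ∫⁻ x in s, ‖g x‖ₑ ∂μ < ‖∫ x, g x ∂μ‖ₑ := by
  have hnorm : ‖∫ x, g x ∂μ‖ₑ = ∫⁻ x, ‖g x‖ₑ ∂μ := by
    rw [← ofReal_integral_norm_eq_lintegral_enorm hgi, ← ofReal_norm,
      Real.norm_of_nonneg (integral_nonneg fun x => (hgpos x).le)]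
    simp only [Real.norm_of_nonneg (hgpos _).le]
  have hpos : ∫⁻ x in sᶜ, ‖g x‖ₑ ∂μ ≠ 0 := by
    intro h
    have hfalse : ∀ᵐ x ∂μ.restrict sᶜ, False :=
      ((lintegral_eq_zero_iff' hgi.1.enorm.restrict).1 h).mono fun x hx =>
        (enorm_pos.2 (hgpos x).ne').ne' hx
    exact hsc <| Measure.restrict_eq_zero.1 <| ae_eq_bot.1 <|
      Filter.eventually_false_iff_eq_bot.1 hfalse
  calc ∫⁻ x in s, ‖g x‖ₑ ∂μ < ∫⁻ x in s, ‖g x‖ₑ ∂μ + ∫⁻ x in sᶜ, ‖g x‖ₑ ∂μ :=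
        ENNReal.lt_add_right hgi.integrableOn.2.ne hpos
    _ = ‖∫ x, g x ∂μ‖ₑ := by rw [lintegral_add_compl _ hs, hnorm]

theorem stmt_7_general (L : ℝ) (γ : ℝ → ℝ) (hγi : Integrable γ) (hγpos : ∀ z, 0 < γ z) :
    ∀ f : ℝ → ℝ, MemLp f 2 (volume.restrict (Icc (-L) L)) →
      ∃ u : ℝ → ℝ, MemLp u 2 (volume.restrict (Icc (-L) L)) ∧
        (∀ᵐ x ∂(volume.restrict (Icc (-L) L)),
          (∫ z : ℝ, γ z) * u x - (∫ y in Icc (-L) L, γ (x - y) * u y) = f x) ∧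
        (∀ u' : ℝ → ℝ, MemLp u' 2 (volume.restrict (Icc (-L) L)) →
          (∀ᵐ x ∂(volume.restrict (Icc (-L) L)),
            (∫ z : ℝ, γ z) * u' x - (∫ y in Icc (-L) L, γ (x - y) * u' y) = f x) →
          u' =ᵐ[volume.restrict (Icc (-L) L)] u) := by
  intro f hf
  have hsub : ∀ x ∈ Icc (-L) L, ∀ y ∈ Icc (-L) L, x - y ∈ Icc (-(2 * L)) (2 * L) :=
    fun x hx y hy => ⟨by linarith [hx.1, hy.2], by linarith [hx.2, hy.1]⟩
  have hrow : ∀ᵐ x ∂(volume.restrict (Icc (-L) L)),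
      ∫⁻ y in Icc (-L) L, ‖γ (x - y)‖ₑ ≤ ∫⁻ z in Icc (-(2 * L)) (2 * L), ‖γ z‖ₑ :=
    (ae_restrict_mem measurableSet_Icc).mono fun x hx =>
      setLIntegral_comp_sub_left_le _ (hsub x hx)
  have hcol : ∀ᵐ y ∂(volume.restrict (Icc (-L) L)),
      ∫⁻ x in Icc (-L) L, ‖γ (x - y)‖ₑ ≤ ∫⁻ z in Icc (-(2 * L)) (2 * L), ‖γ z‖ₑ :=
    (ae_restrict_mem measurableSet_Icc).mono fun y hy =>
      setLIntegral_comp_sub_right_le _ fun x hx => hsub x hx y hy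
  have hcompl : volume (Icc (-(2 * L)) (2 * L))ᶜ ≠ 0 := by
    simp [measure_compl measurableSet_Icc measure_Icc_lt_top.ne]
  exact exists_unique_mul_sub_integral_mul_eq
    (hγi.aestronglyMeasurable.comp_sub_prod_restrict _ _) hrow hcol
    (setLIntegral_enorm_lt_enorm_integral hγi hγpos measurableSet_Icc hcompl) hf

/-- The operator `u ↦ Γu − γ∗u` is a bijection of `L²(Ω)`: for every square-integrable `f`
there is a square-integrable `u`, unique up to a.e. equality, with `Γu − γ∗u = f` a.e. -/
theorem stmt_7 (L : ℝ) (hL : 0 < L) (γ : ℝ → ℝ)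
    (hγe : ∀ z, γ (-z) = γ z) (hγi : Integrable γ) (hγ2 : MemLp γ 2 volume)
    (hγpos : ∀ z, 0 < γ z) :
    ∀ f : ℝ → ℝ, MemLp f 2 (volume.restrict (Icc (-L) L)) →
      ∃ u : ℝ → ℝ, MemLp u 2 (volume.restrict (Icc (-L) L)) ∧
        (∀ᵐ x ∂(volume.restrict (Icc (-L) L)),
          (∫ z : ℝ, γ z) * u x - (∫ y in Icc (-L) L, γ (x - y) * u y) = f x) ∧
        (∀ u' : ℝ → ℝ, MemLp u' 2 (volume.restrict (Icc (-L) L)) →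
          (∀ᵐ x ∂(volume.restrict (Icc (-L) L)),
            (∫ z : ℝ, γ z) * u' x - (∫ y in Icc (-L) L, γ (x - y) * u' y) = f x) →
          u' =ᵐ[volume.restrict (Icc (-L) L)] u) :=
  stmt_7_general L γ hγi hγpos
end

section
/- The linear span of the family consisting of the constant function 1 together with the functions x ↦ sin((2j − 1)πx/(2L)) and x ↦ cos((2j − 1)πx/(2L)) for j = 1, 2, 3, … is dense in L²([−L, L]). -/
/-!
Multiplication by the unimodular factor `exp(-iπx/(2L))` carries `exp(i(2n+1)πx/(2L))` to the
Fourier monomial `exp(2πinx/(2L))` of period `2L` and preserves `L²` norms, so the odd-frequency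
exponentials are dense in `L²(−L, L)` because the Fourier monomials are dense in `L²` of the circle
`ℝ/2Lℤ`. For real `f` one takes real parts and pairs the frequencies `2j+1` and `-(2j+1)`, which
yields the sine–cosine sum with `c₀ = 0`.
-/

open MeasureTheory Set

theorem Finset.sum_Ico_neg_natCast_eq_sum_range {M : Type*} [AddCommMonoid M] (F : ℤ → M)
    (N : ℕ) : ∑ n ∈ Ico (-(N : ℤ)) N, F n = ∑ j ∈ range N, (F j + F (-(j + 1))) := by
  induction N with
  | zero => simp
  | succ N ih =>
    rw [sum_range_succ, ← ih, Nat.cast_succ, neg_add', ← insert_Ico_left_eq_Ico_sub_one (by omega),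
      ← insert_Ico_right_eq_Ico_add_one (by omega), sum_insert (by simp), sum_insert (by simp)]
    abel

theorem Submodule.exists_eq_sum_Ico_of_mem_span_range {R M : Type*} [Semiring R]
    [AddCommMonoid M] [Module R M] {v : ℤ → M} {x : M} (hx : x ∈ span R (range v)) :
    ∃ (N : ℕ) (c : ℤ → R), x = ∑ n ∈ Finset.Ico (-(N : ℤ)) N, c n • v n := by
  classical
  obtain ⟨c, rfl⟩ := Finsupp.mem_span_range_iff_exists_finsupp.mp hx
  refine ⟨c.support.sup Int.natAbs + 1, c, Finset.sum_subset (fun n hn => ?_) fun n _ hn => ?_⟩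
  · have := Finset.le_sup (f := Int.natAbs) hn
    rw [Finset.mem_Ico]
    omega
  · simp [Finsupp.notMem_support_iff.mp hn]

theorem Complex.re_mul_exp_add_re_mul_exp_neg (c d : ℂ) (t : ℝ) :
    (c * exp (t * I)).re + (d * exp (-t * I)).re
      = (d.im - c.im) * Real.sin t + (c.re + d.re) * Real.cos t := by
  rw [← ofReal_neg, mul_re, mul_re, exp_ofReal_mul_I_re, exp_ofReal_mul_I_im,
    exp_ofReal_mul_I_re, exp_ofReal_mul_I_im, Real.cos_neg, Real.sin_neg]
  ring

open Real in
theorem Complex.re_sum_Ico_mul_exp_eq_sum_sin_cos (T x : ℝ) (c : ℤ → ℂ) (N : ℕ) :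
    (∑ n ∈ Finset.Ico (-(N : ℤ)) N, c n * exp ((↑(π / T) + 2 * π * n / T) * x * I)).re
      = ∑ j ∈ Finset.range N,
          (((c (-(j + 1))).im - (c j).im) * Real.sin ((2 * (j : ℝ) + 1) * π * x / T) +
           ((c j).re + (c (-(j + 1))).re) * Real.cos ((2 * (j : ℝ) + 1) * π * x / T)) := by
  rw [re_sum, Finset.sum_Ico_neg_natCast_eq_sum_range]
  refine Finset.sum_congr rfl fun j _ => ?_
  set t := (2 * (j : ℝ) + 1) * π * x / T
  have hpos : (↑(π / T) + 2 * π * (j : ℤ) / T) * (x : ℂ) * I = t * I := by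
    simp only [t]; push_cast; ring
  have hneg : (↑(π / T) + 2 * π * (-((j : ℤ) + 1) : ℤ) / T) * (x : ℂ) * I = -t * I := by
    simp only [t]; push_cast; ring
  rw [hpos, hneg, re_mul_exp_add_re_mul_exp_neg]

theorem Complex.norm_sub_sum_mul_exp_shift (ω T x : ℝ) (z : ℂ) (s : Finset ℤ) (c : ℤ → ℂ) :
    ‖z - ∑ n ∈ s, c n * exp ((ω + 2 * Real.pi * n / T) * x * I)‖
      = ‖exp (↑(-(ω * x)) * I) * z - ∑ n ∈ s, c n * exp (2 * Real.pi * I * n * x / T)‖ := by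
  rw [← one_mul ‖z - _‖, ← norm_exp_ofReal_mul_I (-(ω * x)), ← norm_mul, mul_sub, Finset.mul_sum]
  congr 2
  refine Finset.sum_congr rfl fun n _ => ?_
  rw [mul_left_comm, ← exp_add]
  congr 2
  push_cast
  ring

namespace AddCircle

variable {T : ℝ} [Fact (0 < T)]

theorem exists_mem_span_fourier_eLpNorm_sub_lt {p : ENNReal} [Fact (1 ≤ p)] (hp : p ≠ ⊤)
    {F : AddCircle T → ℂ} (hF : MemLp F p) {ε : ℝ} (hε : 0 < ε) :
    ∃ P ∈ Submodule.span ℂ (range (fourier (T := T))),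
      eLpNorm (F - ⇑P) p volume < ENNReal.ofReal ε := by
  have hdense := (ContinuousMap.toLp_denseRange ℂ volume ℂ hp).topologicalClosure_map_submodule
    (span_fourier_closure_eq_top (T := T))
  have hmem : hF.toLp F ∈ ((Submodule.span ℂ (range fourier)).map
      (ContinuousMap.toLp p volume ℂ : C(AddCircle T, ℂ) →L[ℂ] Lp ℂ p volume).toLinearMap
      ).topologicalClosure := by
    rw [hdense]; trivial
  rw [← SetLike.mem_coe, Submodule.topologicalClosure_coe] at hmem
  obtain ⟨_, ⟨P, hP, rfl⟩, hdist⟩ := Metric.mem_closure_iff.mp hmem ε hε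
  refine ⟨P, hP, ?_⟩
  rw [ContinuousLinearMap.coe_coe, dist_eq_norm, Lp.norm_def, eLpNorm_congr_ae
    ((Lp.coeFn_sub _ _).trans (hF.coeFn_toLp.sub (ContinuousMap.coeFn_toLp volume P)))] at hdist
  rwa [← ENNReal.ofReal_toReal (hF.sub (P.memLp volume ℂ)).eLpNorm_ne_top,
    ENNReal.ofReal_lt_ofReal_iff hε]

end AddCircle

open Complex Real in
theorem exists_sum_Ico_mul_exp_eLpNorm_sub_lt {T : ℝ} (hT : 0 < T) (ω a : ℝ) {p : ENNReal}
    [Fact (1 ≤ p)] (hp : p ≠ ⊤) {f : ℝ → ℂ} (hf : MemLp f p (volume.restrict (Ioc a (a + T))))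
    {ε : ℝ} (hε : 0 < ε) :
    ∃ (N : ℕ) (c : ℤ → ℂ), eLpNorm (fun x => f x - ∑ n ∈ Finset.Ico (-(N : ℤ)) N,
        c n * exp ((ω + 2 * π * n / T) * x * I)) p (volume.restrict (Ioc a (a + T)))
      < ENNReal.ofReal ε := by
  have := Fact.mk hT
  set g : ℝ → ℂ := fun x => exp (↑(-(ω * x)) * I) * f x
  have hg : MemLp g p (volume.restrict (Ioc a (a + T))) :=
    hf.congr_norm ((by fun_prop : Continuous fun x : ℝ => exp (↑(-(ω * x)) * I)
      ).aestronglyMeasurable.mul hf.1)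
      (.of_forall fun x => by simp only [g, norm_mul, norm_exp_ofReal_mul_I, one_mul])
  obtain ⟨P, hP, hgP⟩ := AddCircle.exists_mem_span_fourier_eLpNorm_sub_lt hp hg.memLp_liftIoc hε
  obtain ⟨N, c, rfl⟩ := Submodule.exists_eq_sum_Ico_of_mem_span_range hP
  refine ⟨N, c, lt_of_eq_of_lt ?_ hgP⟩
  rw [← eLpNorm_comp_measurePreserving
    (hg.memLp_liftIoc.1.sub (ContinuousMap.continuous _).aestronglyMeasurable)
    (AddCircle.measurePreserving_mk T a)]
  refine eLpNorm_congr_norm_ae ?_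
  filter_upwards [ae_restrict_mem measurableSet_Ioc] with x hx
  simp only [Function.comp_apply, Pi.sub_apply, AddCircle.liftIoc_coe_apply hx,
    ContinuousMap.coe_sum, Finset.sum_apply, ContinuousMap.coe_smul, Pi.smul_apply,
    fourier_coe_apply, smul_eq_mul]
  exact Complex.norm_sub_sum_mul_exp_shift ω T x (f x) _ c

/-- The span of `1` together with `sin((2j−1)πx/(2L))` and `cos((2j−1)πx/(2L))`,
`j = 1, 2, 3, …`, is dense in `L²([−L, L])`: every square-integrable function can be
approximated in the `L²` norm by finite linear combinations of these functions. -/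
theorem stmt_11 (L : ℝ) (hL : 0 < L) :
    ∀ f : ℝ → ℝ, MemLp f 2 (volume.restrict (Icc (-L) L)) → ∀ ε > (0 : ℝ),
      ∃ (n : ℕ) (c₀ : ℝ) (cs cc : ℕ → ℝ),
        eLpNorm
          (fun x => f x - (c₀ + ∑ j ∈ Finset.range n,
            (cs j * Real.sin ((2 * (j : ℝ) + 1) * Real.pi * x / (2 * L)) +
             cc j * Real.cos ((2 * (j : ℝ) + 1) * Real.pi * x / (2 * L)))))
          2 (volume.restrict (Icc (-L) L)) < ENNReal.ofReal ε := by
  intro f hf ε hε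
  have hIoc : volume.restrict (Ioc (-L) (-L + 2 * L)) = volume.restrict (Icc (-L) L) := by
    rw [show -L + 2 * L = L by ring]
    exact Measure.restrict_congr_set Ioc_ae_eq_Icc
  obtain ⟨N, c, hc⟩ := exists_sum_Ico_mul_exp_eLpNorm_sub_lt (by positivity)
    (Real.pi / (2 * L)) (-L) (p := 2) (f := fun x => (f x : ℂ)) ENNReal.ofNat_ne_top
    (hIoc ▸ hf.ofReal) hε
  refine ⟨N, 0, fun j => (c (-(j + 1))).im - (c j).im, fun j => (c j).re + (c (-(j + 1))).re,
    lt_of_le_of_lt (eLpNorm_mono fun x => ?_) (hIoc ▸ hc)⟩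
  refine le_of_eq_of_le ?_ (Complex.abs_re_le_norm _)
  rw [Complex.sub_re, Complex.ofReal_re,
    Complex.re_sum_Ico_mul_exp_eq_sum_sin_cos, zero_add, Real.norm_eq_abs]
end

section
/- For every continuously differentiable u : ℝ → ℝ with compact support and every x ∈ ℝ, the function Ku is differentiable at x and its derivative satisfies (Ku)′(x) = (Ju)(x) − Γ u′(x). -/
open MeasureTheory Convolution

/-! Splitting the integrand gives `Ku = u ⋆ γ - Γ u` and `Ju = u ⋆ γ' - (∫ γ') u`, where
`∫ γ' = 0` because `γ` and `γ'` are integrable. The convolution is differentiated through its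
compactly supported `C¹` factor, `(u ⋆ γ)' = u' ⋆ γ`, and an integration by parts turns
`u' ⋆ γ` back into `u ⋆ γ'`. -/

section

variable {u g : ℝ → ℝ}

lemma integrable_mul_comp_sub_left (hu : Continuous u) (hcu : HasCompactSupport u)
    (hg : LocallyIntegrable g) (x : ℝ) :
    Integrable (fun y => u y * g (x - y)) :=
  hcu.convolutionExists_left (ContinuousLinearMap.mul ℝ ℝ) hu hg x

lemma integral_sub_mul_comp_sub_eq_convolution_sub (hu : Continuous u)
    (hcu : HasCompactSupport u) (hg : Integrable g) (x : ℝ) :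
    ∫ y, (u y - u x) * g (x - y)
      = (u ⋆[ContinuousLinearMap.mul ℝ ℝ] g) x - (∫ z, g z) * u x := by
  simp_rw [sub_mul]
  rw [integral_sub (integrable_mul_comp_sub_left hu hcu hg.locallyIntegrable x)
      ((hg.comp_sub_left x).const_mul _), integral_const_mul,
    integral_sub_left_eq_self (fun z => g z) volume x, convolution_def]
  simp [mul_comm]

lemma convolution_deriv_left_eq_convolution_deriv_right (hu : ContDiff ℝ 1 u)
    (hcu : HasCompactSupport u) (hg : Differentiable ℝ g) (hg' : LocallyIntegrable (deriv g))
    (x : ℝ) :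
    (deriv u ⋆[ContinuousLinearMap.mul ℝ ℝ] g) x
      = (u ⋆[ContinuousLinearMap.mul ℝ ℝ] deriv g) x := by
  have parts := integral_mul_deriv_eq_deriv_mul_of_integrable
    (u := u) (v := fun y => g (x - y)) (v' := fun y => -deriv g (x - y))
    (fun y _ => (hu.differentiable one_ne_zero y).hasDerivAt)
    (fun y _ => (hg (x - y)).hasDerivAt.comp_const_sub x y)
    (by simpa [Pi.mul_def] using (integrable_mul_comp_sub_left hu.continuous hcu hg' x).neg)
    (integrable_mul_comp_sub_left (hu.continuous_deriv le_rfl) hcu.deriv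
      hg.continuous.locallyIntegrable x)
    (integrable_mul_comp_sub_left hu.continuous hcu hg.continuous.locallyIntegrable x)
  simpa [convolution_def, integral_neg] using parts.symm

end

/-- For `u` continuously differentiable with compact support, `Ku` is differentiable and
`(Ku)′(x) = (Ju)(x) − Γ u′(x)`. -/
theorem stmt_13 (γ : ℝ → ℝ) (hγ : ContDiff ℝ 1 γ)
    (hγi : Integrable γ) (hγ'i : Integrable (deriv γ)) :
    ∀ u : ℝ → ℝ, ContDiff ℝ 1 u → HasCompactSupport u → ∀ x : ℝ,
      HasDerivAt (fun x' => ∫ y : ℝ, (u y - u x') * γ (x' - y))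
        ((∫ y : ℝ, (u y - u x) * deriv γ (x - y)) - (∫ z : ℝ, γ z) * deriv u x) x := by
  intro u hu hcu x
  have hγ' : ∫ z, deriv γ z = 0 := integral_eq_zero_of_hasDerivAt_of_integrable
    (fun z => (hγ.differentiable one_ne_zero z).hasDerivAt) hγ'i hγi
  have hK : (fun x' => ∫ y, (u y - u x') * γ (x' - y))
      = fun x' => (u ⋆[ContinuousLinearMap.mul ℝ ℝ] γ) x' - (∫ z, γ z) * u x' :=
    funext (integral_sub_mul_comp_sub_eq_convolution_sub hu.continuous hcu hγi)
  rw [hK, integral_sub_mul_comp_sub_eq_convolution_sub hu.continuous hcu hγ'i, hγ', zero_mul,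
    sub_zero, ← convolution_deriv_left_eq_convolution_deriv_right hu hcu
      (hγ.differentiable one_ne_zero) hγ'i.locallyIntegrable]
  exact (hcu.hasDerivAt_convolution_left _ hu hγi.locallyIntegrable x).sub
    ((hu.differentiable one_ne_zero x).hasDerivAt.const_mul _)
end

section
/- Assume f is differentiable on [0, T] and that for every t ∈ [0, T] the identity (1/2) f′(t) + d · B[u(t,·), u(t,·)] + μ f(t) = ∫_Ω σ(u(t,x))² σ(w(t,x)) (1 − b σ(u(t,x))) u(t,x) dx holds. Then f(t) ≤ e^{2(M² + bM³) t} f(0) for all t ∈ [0, T]. -/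
/-!
Test the equation with `u` itself: the nonlocal form `B[u,u]` and the decay term `μ f` are
nonnegative, and since `|σ s| ≤ min M |s|` the reaction integrand is bounded pointwise by
`(M² + bM³) u²`. Hence `f' ≤ 2 (M² + bM³) f`, and Gronwall's inequality gives the estimate.
-/

open MeasureTheory Set

theorem le_exp_mul_of_hasDerivWithinAt_le {f f' : ℝ → ℝ} {a b c : ℝ}
    (hf : ∀ t ∈ Icc a b, HasDerivWithinAt f (f' t) (Icc a b) t)
    (hbound : ∀ t ∈ Ico a b, f' t ≤ c * f t) :
    ∀ t ∈ Icc a b, f t ≤ Real.exp (c * (t - a)) * f a := by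
  intro t ht
  have key := le_gronwallBound_of_liminf_deriv_right_le (f := f) (f' := f') (ε := 0)
    (fun x hx => (hf x hx).continuousWithinAt)
    (fun x hx _ hr => ((hf x (Ico_subset_Icc_self hx)).mono_of_mem_nhdsWithin
      (Icc_mem_nhdsGE_of_mem hx)).liminf_right_slope_le hr)
    le_rfl (by simpa using hbound) t ht
  rwa [gronwallBound_ε0, mul_comm] at key

theorem abs_reaction_le {σ : ℝ → ℝ} {b M : ℝ} (hb : 0 ≤ b) (hσM : ∀ s, |σ s| ≤ M)
    (hσs : ∀ s, |σ s| ≤ |s|) (a v : ℝ) :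
    |σ a ^ 2 * σ v * (1 - b * σ a) * a| ≤ (M ^ 2 + b * M ^ 3) * a ^ 2 := by
  have hM : 0 ≤ M := (abs_nonneg _).trans (hσM 0)
  have h1bs : |1 - b * σ a| ≤ 1 + b * M := by
    calc |1 - b * σ a| ≤ |1| + |b * σ a| := abs_sub _ _
      _ = 1 + b * |σ a| := by rw [abs_one, abs_mul, abs_of_nonneg hb]
      _ ≤ 1 + b * M := by gcongr; exact hσM a
  calc |σ a ^ 2 * σ v * (1 - b * σ a) * a|
      = |σ a| * |σ a| * |σ v| * |1 - b * σ a| * |a| := by simp only [abs_mul, sq]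
    _ ≤ (M * |a|) * M * (1 + b * M) * |a| := by
        gcongr ?_ * ?_ * ?_ * ?_ * _
        exacts [hσM a, hσs a, hσM v]
    _ = (M ^ 2 + b * M ^ 3) * a ^ 2 := by rw [← sq_abs a]; ring

theorem setIntegral_le_mul_integral_sq {α : Type*} [MeasurableSpace α] {ν : Measure α}
    {g v : α → ℝ} {K : ℝ} (s : Set α) (hK : 0 ≤ K) (hv : MemLp v 2 ν)
    (hg : ∀ x, |g x| ≤ K * v x ^ 2) :
    ∫ x in s, g x ∂ν ≤ K * ∫ x, v x ^ 2 ∂ν :=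
  -- no measurability of `g` is needed: if `g` is not integrable its integral is `0`
  calc ∫ x in s, g x ∂ν
      ≤ ∫ x in s, K * v x ^ 2 ∂ν :=
        (Real.le_norm_self _).trans <| norm_integral_le_of_norm_le
          (hv.integrable_sq.const_mul K).restrict (ae_of_all _ hg)
    _ ≤ ∫ x, K * v x ^ 2 ∂ν :=
        setIntegral_le_integral (hv.integrable_sq.const_mul K)
          (ae_of_all _ fun x => by positivity)
    _ = K * ∫ x, v x ^ 2 ∂ν := integral_const_mul K _

theorem integral_integral_sub_mul_mul_sub_nonneg {α β : Type*} [MeasurableSpace α]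
    [MeasurableSpace β] {μ : Measure α} {ν : Measure β} {k : α → β → ℝ}
    (hk : ∀ x y, 0 ≤ k x y) (v : β → ℝ) (w : α → ℝ) :
    0 ≤ ∫ x, ∫ y, (v y - w x) * k x y * (v y - w x) ∂ν ∂μ :=
  integral_nonneg fun x => integral_nonneg fun y => by
    have := hk x y
    rw [mul_right_comm, ← sq]
    positivity

theorem stmt_16_general (L T d μ b M : ℝ)
    (hd : 0 ≤ d) (hμ : 0 ≤ μ) (hb : 0 ≤ b)
    (γ : ℝ → ℝ) (hγ0 : ∀ z, 0 ≤ γ z)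
    (σ : ℝ → ℝ) (hσM : ∀ s, |σ s| ≤ M) (hσs : ∀ s, |σ s| ≤ |s|)
    (u w : ℝ → ℝ → ℝ)
    (hu : ∀ t ∈ Icc (0 : ℝ) T, MemLp (u t) 2 volume ∧
      (∀ᵐ x : ℝ, x ∉ Icc (-L) L → u t x = 0))
    (f f' : ℝ → ℝ) (hf : ∀ t, f t = ∫ x : ℝ, (u t x) ^ 2)
    (hder : ∀ t ∈ Icc (0 : ℝ) T, HasDerivWithinAt f (f' t) (Icc (0 : ℝ) T) t)
    (hid : ∀ t ∈ Icc (0 : ℝ) T,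
      (1/2 : ℝ) * f' t
        + d * ((1/2 : ℝ) * ∫ x : ℝ, ∫ y : ℝ, (u t y - u t x) * γ (x - y) * (u t y - u t x))
        + μ * f t
      = ∫ x in Icc (-L) L, σ (u t x) ^ 2 * σ (w t x) * (1 - b * σ (u t x)) * u t x) :
    ∀ t ∈ Icc (0 : ℝ) T, f t ≤ Real.exp (2 * (M ^ 2 + b * M ^ 3) * t) * f 0 := by
  have hM : 0 ≤ M := (abs_nonneg _).trans (hσM 0)
  have hbound : ∀ t ∈ Ico (0 : ℝ) T, f' t ≤ 2 * (M ^ 2 + b * M ^ 3) * f t := by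
    intro t ht
    have hmem := (hu t (Ico_subset_Icc_self ht)).1
    have hreaction := setIntegral_le_mul_integral_sq (Icc (-L) L) (by positivity) hmem
      fun x => abs_reaction_le hb hσM hσs (u t x) (w t x)
    have hform := integral_integral_sub_mul_mul_sub_nonneg (μ := volume) (ν := volume)
      (fun x y => hγ0 (x - y)) (u t) (u t)
    have hf_nonneg : 0 ≤ f t := (hf t).symm ▸ integral_nonneg fun x => sq_nonneg _
    rw [← hf, ← hid t (Ico_subset_Icc_self ht)] at hreaction
    linarith [mul_nonneg hd hform, mul_nonneg hμ hf_nonneg]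
  intro t ht
  simpa using le_exp_mul_of_hasDerivWithinAt_le hder hbound t ht

/-- Energy estimate for the plant variable: if `f(t) = ‖u(t)‖²_{L²}` satisfies the Galerkin
energy identity, then `f(t) ≤ e^{2(M² + bM³)t} f(0)` on `[0, T]`. -/
theorem stmt_16 (L T d μ b M : ℝ) (hL : 0 < L) (hT : 0 < T)
    (hd : 0 ≤ d) (hμ : 0 ≤ μ) (hb : 0 ≤ b) (hM : 0 ≤ M)
    (γ : ℝ → ℝ) (hγm : Measurable γ) (hγ0 : ∀ z, 0 ≤ γ z) (hγe : ∀ z, γ (-z) = γ z)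
    (hγi : Integrable γ)
    (σ : ℝ → ℝ) (hσm : Measurable σ) (hσM : ∀ s, |σ s| ≤ M) (hσs : ∀ s, |σ s| ≤ |s|)
    (u w : ℝ → ℝ → ℝ)
    (hu : ∀ t ∈ Icc (0 : ℝ) T, MemLp (u t) 2 volume ∧
      (∀ᵐ x : ℝ, x ∉ Icc (-L) L → u t x = 0))
    (hw : ∀ t ∈ Icc (0 : ℝ) T, Measurable (w t))
    (f f' : ℝ → ℝ) (hf : ∀ t, f t = ∫ x : ℝ, (u t x) ^ 2)
    (hder : ∀ t ∈ Icc (0 : ℝ) T, HasDerivWithinAt f (f' t) (Icc (0 : ℝ) T) t)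
    (hid : ∀ t ∈ Icc (0 : ℝ) T,
      (1/2 : ℝ) * f' t
        + d * ((1/2 : ℝ) * ∫ x : ℝ, ∫ y : ℝ, (u t y - u t x) * γ (x - y) * (u t y - u t x))
        + μ * f t
      = ∫ x in Icc (-L) L, σ (u t x) ^ 2 * σ (w t x) * (1 - b * σ (u t x)) * u t x) :
    ∀ t ∈ Icc (0 : ℝ) T, f t ≤ Real.exp (2 * (M ^ 2 + b * M ^ 3) * t) * f 0 :=
  stmt_16_general L T d μ b M hd hμ hb γ hγ0 σ hσM hσs u w hu f f' hf hder hid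
end

section
/- Assume g is differentiable on [0, T] and that for every t ∈ [0, T] the identity (1/2) g′(t) + ∫_{−L}^{L} (∂ₓw(t,x))² dx − ν ∫_{−L}^{L} ∂ₓw(t,x) w(t,x) dx + g(t) = ∫_{−L}^{L} (a − σ(u(t,x))² σ(w(t,x))) w(t,x) dx holds. Then g(t) ≤ g(0) + 2 L a² t for all t ∈ [0, T]. -/
open MeasureTheory Set

/-!
In the energy identity the dissipation `∫ (∂ₓw)²` is nonnegative and the transport term
`∫ ∂ₓw · w = [w²/2]` vanishes by the boundary conditions, leaving `g'/2 + g ≤ ∫ (a - σ(u)² σ(w)) w`.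
Since `σ(w) w ≥ 0`, the integrand is at most `a w ≤ a²/2 + w²/2`, so `g' ≤ 2La²`, and the bound on
`g` follows by integrating in time.
-/

theorem integral_deriv_mul_self {f f' : ℝ → ℝ} {a b : ℝ}
    (hf : ∀ x ∈ uIcc a b, HasDerivAt f (f' x) x)
    (hint : IntervalIntegrable (fun x => f' x * f x) volume a b) :
    ∫ x in a..b, f' x * f x = (f b ^ 2 - f a ^ 2) / 2 := by
  have hsq : ∀ x ∈ uIcc a b, HasDerivAt (fun y => f y ^ 2 / 2) (f' x * f x) x := fun x hx =>
    (((hf x hx).fun_pow 2).div_const 2).congr_deriv (by ring)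
  rw [intervalIntegral.integral_eq_sub_of_hasDerivAt hsq hint]
  ring

theorem sub_mul_le_sq_add_sq_div_two {a b s : ℝ} (h : 0 ≤ b * s) :
    (a - b) * s ≤ a ^ 2 / 2 + s ^ 2 / 2 := by
  nlinarith [sq_nonneg (a - s)]

theorem le_add_mul_sub_of_hasDerivWithinAt_le {f f' : ℝ → ℝ} {a b C : ℝ}
    (hf : ∀ t ∈ Icc a b, HasDerivWithinAt f (f' t) (Icc a b) t)
    (hC : ∀ t ∈ Icc a b, f' t ≤ C) :
    ∀ t ∈ Icc a b, f t ≤ f a + C * (t - a) := by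
  have hmono : MonotoneOn (fun t => C * t - f t) (Icc a b) := by
    refine monotoneOn_of_hasDerivWithinAt_nonneg (f' := fun t => C - f' t) (convex_Icc a b)
      (fun t ht => ((continuousWithinAt_id.const_mul C).sub (hf t ht).continuousWithinAt))
      (fun t ht => ?_) (fun t ht => sub_nonneg.2 (hC t (interior_subset ht)))
    simpa using ((hasDerivWithinAt_id t _).const_mul C).fun_sub
      ((hf t (interior_subset ht)).mono interior_subset)
  intro t ht
  have := hmono (left_mem_Icc.2 (ht.1.trans ht.2)) ht ht.1
  simp only at this
  linarith

theorem intervalIntegrable_reaction {σ u v : ℝ → ℝ} {a M l r : ℝ} (hσm : Measurable σ)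
    (hσM : ∀ s, |σ s| ≤ M) (hu : Measurable u) (hv : ContinuousOn v (uIcc l r)) :
    IntervalIntegrable (fun x => (a - σ (u x) ^ 2 * σ (v x)) * v x) volume l r := by
  have hvm : AEStronglyMeasurable v (volume.restrict (uIoc l r)) :=
    (hv.mono uIoc_subset_uIcc).aestronglyMeasurable measurableSet_uIoc
  refine (intervalIntegrable_iff.2 ((hv.intervalIntegrable (μ := volume)).def'.bdd_mul
    (c := |a| + M ^ 2 * M) ?_ (.of_forall fun x => ?_)))
  · exact (aemeasurable_const.sub (((hσm.comp hu).pow_const 2).aemeasurable.mul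
      (hσm.comp_aemeasurable hvm.aemeasurable))).aestronglyMeasurable
  · calc ‖a - σ (u x) ^ 2 * σ (v x)‖ ≤ |a| + |σ (u x)| ^ 2 * |σ (v x)| := by
          rw [Real.norm_eq_abs, ← abs_pow, ← abs_mul]
          exact abs_sub _ _
      _ ≤ |a| + M ^ 2 * M := by gcongr <;> exact hσM _

theorem le_of_energy_identity {σ u v v' : ℝ → ℝ} {L a ν M G' : ℝ} (hL : 0 ≤ L)
    (hσm : Measurable σ) (hσM : ∀ s, |σ s| ≤ M) (hσsign : ∀ s, 0 ≤ σ s * s)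
    (hv : ∀ x ∈ Icc (-L) L, HasDerivAt v (v' x) x) (hv' : ContinuousOn v' (Icc (-L) L))
    (hvl : v (-L) = 0) (hvr : v L = 0) (hu : Measurable u)
    (hid : (1/2 : ℝ) * G' + (∫ x in (-L)..L, (v' x) ^ 2) - ν * (∫ x in (-L)..L, v' x * v x)
        + (∫ x in (-L)..L, (v x) ^ 2) = ∫ x in (-L)..L, (a - σ (u x) ^ 2 * σ (v x)) * v x) :
    G' ≤ 2 * L * a ^ 2 := by
  have hLL : -L ≤ L := by linarith
  have hI : uIcc (-L) L = Icc (-L) L := uIcc_of_le hLL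
  have hvc : ContinuousOn v (Icc (-L) L) := fun x hx =>
    (hv x hx).continuousAt.continuousWithinAt
  have htransport : ∫ x in (-L)..L, v' x * v x = 0 := by
    rw [integral_deriv_mul_self (hI ▸ hv) ((hv'.mul hvc).intervalIntegrable_of_Icc hLL), hvl, hvr]
    ring
  have hdissip : 0 ≤ ∫ x in (-L)..L, (v' x) ^ 2 :=
    intervalIntegral.integral_nonneg hLL fun x _ => sq_nonneg _
  have henergy : 0 ≤ ∫ x in (-L)..L, (v x) ^ 2 :=
    intervalIntegral.integral_nonneg hLL fun x _ => sq_nonneg _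
  have hv2 : IntervalIntegrable (fun x => (v x) ^ 2 / 2) volume (-L) L :=
    ((hvc.pow 2).div_const 2).intervalIntegrable_of_Icc hLL
  have hreaction : ∫ x in (-L)..L, (a - σ (u x) ^ 2 * σ (v x)) * v x
      ≤ L * a ^ 2 + (∫ x in (-L)..L, (v x) ^ 2) / 2 :=
    calc ∫ x in (-L)..L, (a - σ (u x) ^ 2 * σ (v x)) * v x
        ≤ ∫ x in (-L)..L, (a ^ 2 / 2 + (v x) ^ 2 / 2) :=
          intervalIntegral.integral_mono_on hLL
            (intervalIntegrable_reaction hσm hσM hu (hI ▸ hvc))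
            (intervalIntegrable_const.add hv2) fun x _ =>
              sub_mul_le_sq_add_sq_div_two (by
                simpa [mul_assoc] using mul_nonneg (sq_nonneg (σ (u x))) (hσsign (v x)))
      _ = L * a ^ 2 + (∫ x in (-L)..L, (v x) ^ 2) / 2 := by
          rw [intervalIntegral.integral_add intervalIntegrable_const hv2,
            intervalIntegral.integral_const, intervalIntegral.integral_div, smul_eq_mul]
          ring
  rw [htransport] at hid
  linarith

theorem stmt_17_general (L T a ν M : ℝ) (hL : 0 < L)
    (σ : ℝ → ℝ) (hσm : Measurable σ) (hσM : ∀ s, |σ s| ≤ M) (hσsign : ∀ s, 0 ≤ σ s * s)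
    (w w' u : ℝ → ℝ → ℝ)
    (hw : ∀ t ∈ Icc (0 : ℝ) T,
      (∀ x ∈ Icc (-L) L, HasDerivAt (w t) (w' t x) x) ∧
      ContinuousOn (w' t) (Icc (-L) L) ∧ w t (-L) = 0 ∧ w t L = 0)
    (hu : ∀ t ∈ Icc (0 : ℝ) T, Measurable (u t))
    (g g' : ℝ → ℝ) (hg : ∀ t, g t = ∫ x in (-L)..L, (w t x) ^ 2)
    (hder : ∀ t ∈ Icc (0 : ℝ) T, HasDerivWithinAt g (g' t) (Icc (0 : ℝ) T) t)
    (hid : ∀ t ∈ Icc (0 : ℝ) T,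
      (1/2 : ℝ) * g' t + (∫ x in (-L)..L, (w' t x) ^ 2)
        - ν * (∫ x in (-L)..L, w' t x * w t x) + g t
      = ∫ x in (-L)..L, (a - σ (u t x) ^ 2 * σ (w t x)) * w t x) :
    ∀ t ∈ Icc (0 : ℝ) T, g t ≤ g 0 + 2 * L * a ^ 2 * t := by
  have hderiv_le : ∀ t ∈ Icc (0 : ℝ) T, g' t ≤ 2 * L * a ^ 2 := fun t ht => by
    obtain ⟨hwd, hw'c, hwl, hwr⟩ := hw t ht
    exact le_of_energy_identity hL.le hσm hσM hσsign hwd hw'c hwl hwr (hu t ht)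
      (hg t ▸ hid t ht)
  intro t ht
  simpa using le_add_mul_sub_of_hasDerivWithinAt_le hder hderiv_le t ht

/-- Energy estimate for the water variable: if `g(t) = ‖w(t)‖²_{L²}` satisfies the Galerkin
energy identity, then `g(t) ≤ g(0) + 2La²t` on `[0, T]`. -/
theorem stmt_17 (L T a ν M : ℝ) (hL : 0 < L) (hT : 0 < T) (hM : 0 ≤ M)
    (σ : ℝ → ℝ) (hσm : Measurable σ) (hσM : ∀ s, |σ s| ≤ M) (hσsign : ∀ s, 0 ≤ σ s * s)
    (w w' u : ℝ → ℝ → ℝ)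
    (hw : ∀ t ∈ Icc (0 : ℝ) T,
      (∀ x ∈ Icc (-L) L, HasDerivAt (w t) (w' t x) x) ∧
      ContinuousOn (w' t) (Icc (-L) L) ∧ w t (-L) = 0 ∧ w t L = 0)
    (hu : ∀ t ∈ Icc (0 : ℝ) T, Measurable (u t))
    (g g' : ℝ → ℝ) (hg : ∀ t, g t = ∫ x in (-L)..L, (w t x) ^ 2)
    (hder : ∀ t ∈ Icc (0 : ℝ) T, HasDerivWithinAt g (g' t) (Icc (0 : ℝ) T) t)
    (hid : ∀ t ∈ Icc (0 : ℝ) T,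
      (1/2 : ℝ) * g' t + (∫ x in (-L)..L, (w' t x) ^ 2)
        - ν * (∫ x in (-L)..L, w' t x * w t x) + g t
      = ∫ x in (-L)..L, (a - σ (u t x) ^ 2 * σ (w t x)) * w t x) :
    ∀ t ∈ Icc (0 : ℝ) T, g t ≤ g 0 + 2 * L * a ^ 2 * t :=
  stmt_17_general L T a ν M hL σ hσm hσM hσsign w w' u hw hu g g' hg hder hid
end
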